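/- arXiv:2001.10572 — 2 statements merged into one kernel-verified Lean document; each statement's English description precedes it below -/
import Mathlib

section
/- Let q be a prime power, let K be a finite field with q elements, let L be a field extension of K of degree n, let θ : Lˣ → ℂˣ be an injective group homomorphism, and let e be an integer. Then Σ_{α} θ(α)^e = Σ_{s | n} μ̂(n/s) · (q^s − 1) · δ[(q^s − 1) divides e], where the left-hand sum is over all α ∈ Lˣ with [K(α) : K] = n (i.e., α generating L over K), μ̂ is the Möbius function, and δ[P] is 1 if P holds and 0 otherwise. -/
/-!
An element `α ∈ Lˣ` has `[K(α) : K] ∣ s` iff its minimal polynomial divides `X^(q^s) - X`, i.e.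
iff `α^(q^s - 1) = 1`. Summing `θ(α)^e` over the elements of each exact degree `d` therefore
gives a function whose divisor sums are the sums of `θ^e` over the `(q^s - 1)`-th roots of unity
in `Lˣ`; by character orthogonality these equal `(q^s - 1)·δ[(q^s - 1) ∣ e]`, and Möbius
inversion recovers the exact degree `n`.
-/

open IntermediateField

theorem finrank_adjoin_simple_dvd_iff {K L : Type*} [Field K] [Finite K] [Field L] [Algebra K L]
    {α : L} (hα : IsIntegral K α) (s : ℕ) :
    Module.finrank K K⟮α⟯ ∣ s ↔ α ^ Nat.card K ^ s = α := by
  rw [adjoin.finrank hα,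
    (minpoly.irreducible hα).natDegree_dvd_iff_dvd_X_pow_card_pow_sub_X, minpoly.dvd_iff]
  simp [sub_eq_zero]

theorem Finset.sum_divisors_sum_ite_eq {ι M : Type*} [Fintype ι] [AddCommMonoid M] (deg : ι → ℕ)
    (w : ι → M) {s : ℕ} (hs : s ≠ 0) :
    ∑ d ∈ s.divisors, ∑ i, (if deg i = d then w i else 0) =
      ∑ i, if deg i ∣ s then w i else 0 := by
  rw [Finset.sum_comm]
  exact Finset.sum_congr rfl fun i _ => by
    rw [Finset.sum_ite_eq]
    exact if_congr (by simp [Nat.mem_divisors, hs]) rfl rfl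

theorem Units.pow_sub_one_eq_one_iff {M : Type*} [Monoid M] (u : Mˣ) {k : ℕ} (hk : k ≠ 0) :
    u ^ (k - 1) = 1 ↔ (u : M) ^ k = u := by
  rw [← Units.val_pow_eq_pow_val, Units.val_inj, ← mul_eq_right (b := u), ← pow_succ,
    Nat.sub_add_cancel (Nat.one_le_iff_ne_zero.mpr hk)]

theorem IsCyclic.exists_isPrimitiveRoot {G : Type*} [CommGroup G] [Finite G] [IsCyclic G] {m : ℕ}
    (hm : m ∣ Nat.card G) : ∃ ζ : G, IsPrimitiveRoot ζ m := by
  obtain ⟨g, hg⟩ := IsCyclic.exists_ofOrder_eq_natCard (α := G)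
  have hcard : Nat.card G ≠ 0 := Nat.card_pos.ne'
  have hquot : Nat.card G / m ≠ 0 :=
    (Nat.div_ne_zero_iff_of_dvd hm).mpr ⟨hcard, ne_zero_of_dvd_ne_zero hcard hm⟩
  have := (IsPrimitiveRoot.orderOf g).pow_of_dvd hquot (hg.symm ▸ Nat.div_dvd_of_dvd hm)
  rw [hg, Nat.div_div_self hm hcard] at this
  exact ⟨_, this⟩

theorem sum_ite_pow_eq_one_zpow {L S : Type*} [Field L] [Fintype L] [DecidableEq L] [Field S]
    (θ : Lˣ →* Sˣ) (hθ : Function.Injective θ) {m : ℕ} (hm : m ∣ Fintype.card Lˣ) (e : ℤ) :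
    ∑ x : Lˣ, (if x ^ m = 1 then (θ x : S) ^ e else 0) = if (m : ℤ) ∣ e then (m : S) else 0 := by
  classical
  obtain ⟨ζ, hζ⟩ := IsCyclic.exists_isPrimitiveRoot (Nat.card_eq_fintype_card (α := Lˣ) ▸ hm)
  have : NeZero m := ⟨by rw [hζ.eq_orderOf]; exact (orderOf_pos ζ).ne'⟩
  let χ : rootsOfUnity m L →* S :=
    (Units.coeHom S).comp ((zpowGroupHom e).comp (θ.comp (rootsOfUnity m L).subtype))
  have hχ_apply (x : rootsOfUnity m L) : χ x = (θ x : S) ^ e := by simp [χ]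
  have hχ : χ = 1 ↔ (m : ℤ) ∣ e := by
    constructor
    · intro h
      have hζe := DFunLike.congr_fun h ⟨ζ, hζ.mem_rootsOfUnity⟩
      rw [hχ_apply, MonoidHom.one_apply, ← Units.val_zpow_eq_zpow_val, Units.val_eq_one,
        ← map_zpow, map_eq_one_iff θ hθ] at hζe
      exact (hζ.zpow_eq_one_iff_dvd e).mp hζe
    · rintro ⟨k, rfl⟩
      ext x
      have hx : (x : Lˣ) ^ m = 1 := (mem_rootsOfUnity m _).mp x.2
      rw [hχ_apply, MonoidHom.one_apply, zpow_mul, zpow_natCast, ← Units.val_pow_eq_pow_val,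
        ← map_pow, hx, map_one, Units.val_one, one_zpow]
  have : Fintype (rootsOfUnity m L) := Fintype.ofFinite _
  rw [← Finset.sum_filter, Finset.sum_subtype _ (p := (· ∈ rootsOfUnity m L)) (fun x => by simp),
    Finset.sum_congr rfl fun x _ => (hχ_apply x).symm, sum_hom_units χ,
    ← Nat.card_eq_fintype_card, hζ.card_rootsOfUnity', Nat.cast_ite, Nat.cast_zero]
  exact if_congr hχ rfl rfl

/-- Lemma 4.6 of the paper (element-level form): for a finite field `K` with `q` elements, a
degree-`n` extension `L/K`, an injective character `θ : Lˣ → ℂˣ` and an integer `e`, the sum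
of `θ(α)^e` over all `α ∈ Lˣ` generating `L` over `K` equals
`Σ_{s ∣ n} μ̂(n/s)(q^s - 1)·δ[(q^s - 1) ∣ e]`. -/
theorem character_sum_over_generators
    (n : ℕ) (hn : 1 ≤ n) (K L : Type) [Field K] [Fintype K] [Field L] [Fintype L] [DecidableEq L]
    [Algebra K L] (hdim : Module.finrank K L = n)
    (θ : Lˣ →* ℂˣ) (hθ : Function.Injective θ) (e : ℤ) :
    (∑ α : Lˣ,
        if Module.finrank K (IntermediateField.adjoin K {(α : L)}) = n
        then ((θ α : ℂ) ^ e) else 0)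
      = ∑ s ∈ n.divisors,
          ((ArithmeticFunction.moebius (n / s)) : ℂ) * ((Fintype.card K : ℂ) ^ s - 1) *
            (if ((Fintype.card K ^ s - 1 : ℕ) : ℤ) ∣ e then 1 else 0) := by
  set q := Fintype.card K
  have hdeg (α : Lˣ) (s : ℕ) : Module.finrank K K⟮(α : L)⟯ ∣ s ↔ α ^ (q ^ s - 1) = 1 := by
    rw [finrank_adjoin_simple_dvd_iff (Algebra.IsIntegral.isIntegral _),
      Units.pow_sub_one_eq_one_iff α (pow_ne_zero _ Fintype.card_ne_zero),
      Nat.card_eq_fintype_card]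
  let g (s : ℕ) : ℂ := ∑ α : Lˣ, if α ^ (q ^ s - 1) = 1 then (θ α : ℂ) ^ e else 0
  have hsum_divisors : ∀ s > 0, ∑ d ∈ s.divisors,
      (∑ α : Lˣ, if Module.finrank K K⟮(α : L)⟯ = d then (θ α : ℂ) ^ e else 0) = g s :=
    fun s hs => by
      rw [Finset.sum_divisors_sum_ite_eq _ _ hs.ne']
      exact Finset.sum_congr rfl fun α _ => if_congr (hdeg α s) rfl rfl
  have hcard : Fintype.card Lˣ = q ^ n - 1 := by
    rw [Fintype.card_units, Module.card_eq_pow_finrank (K := K), hdim]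
  rw [← (ArithmeticFunction.sum_eq_iff_sum_mul_moebius_eq.mp hsum_divisors) n hn,
    Nat.sum_divisorsAntidiagonal' (fun a b => (ArithmeticFunction.moebius a : ℂ) * g b)]
  refine Finset.sum_congr rfl fun s hs => ?_
  rw [show g s = _ from sum_ite_pow_eq_one_zpow θ hθ (hcard ▸ Nat.pow_sub_one_dvd_pow_sub_one q
    (Nat.dvd_of_mem_divisors hs)) e,
    Nat.cast_pred (R := ℂ) (pow_pos Fintype.card_pos _), Nat.cast_pow]
  split_ifs <;> ring
end

section
/- Let n ≥ 1, let d be a divisor of n, and let r be an integer with 0 ≤ r ≤ n/d − 1. Define e(n,d,r) = d·(r+1)r/2 + (n+1)n/2 − d·(n/d + 1)(n/d)/2 + d·r·(n/d − 1 − r). Then e(n,d,r) ≥ 0; moreover e(n,1,0) = 0, and e(n,d,r) > 0 whenever (d,r) ≠ (1,0). -/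
/-- The exponent `e(n,d,r) = d·C(r+1,2) + C(n+1,2) − d·C(n/d+1,2) + d·r·(n/d − 1 − r)`
governing the growth of the character degree `deg_{n,d,r}(q)`. -/
def eExp (n d r : ℕ) : ℤ :=
  (d : ℤ) * ((r * (r + 1) / 2 : ℕ) : ℤ) + ((n * (n + 1) / 2 : ℕ) : ℤ) -
    (d : ℤ) * (((n / d) * (n / d + 1) / 2 : ℕ) : ℤ) +
    (d : ℤ) * (r : ℤ) * ((n / d - 1 - r : ℕ) : ℤ)

lemma tri_cast (a : ℕ) : ((a * (a + 1) / 2 : ℕ) : ℤ) * 2 = (a : ℤ) * (a + 1) := by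
  have h : 2 ∣ a * (a + 1) := (Nat.even_mul_succ_self a).two_dvd
  exact_mod_cast Nat.div_mul_cancel h

lemma two_eExp (n d r m : ℕ) (hd0 : d ≠ 0) (hm : d * m = n) (hrm : r + 1 ≤ m) :
    eExp n d r * 2 = (d : ℤ) * r * (2 * m - r - 1) + (m : ℤ) * m * d * (d - 1) := by
  have hmd : n / d = m := by rw [← hm, Nat.mul_div_cancel_left _ (Nat.pos_of_ne_zero hd0)]
  have hsub : ((m - 1 - r : ℕ) : ℤ) = (m : ℤ) - 1 - r := by
    have h' : m - 1 - r = m - (r + 1) := by omega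
    rw [h', Nat.cast_sub hrm]
    push_cast
    ring
  have h1 := tri_cast r
  have h2 := tri_cast n
  have h3 := tri_cast m
  have hn : (n : ℤ) = (d : ℤ) * m := by exact_mod_cast hm.symm
  unfold eExp
  rw [hmd, hsub]
  nlinarith [h1, h2, h3, hn]

/-- The arithmetic part of Lemma 5.1 of the paper: `e(n,d,r) ≥ 0`, with `e(n,1,0) = 0` and
`e(n,d,r) > 0` whenever `(d,r) ≠ (1,0)`. -/
theorem eExp_nonneg (n d r : ℕ) (hn : 1 ≤ n) (hd : d ∣ n) (hr : r ≤ n / d - 1) :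
    0 ≤ eExp n d r ∧ eExp n 1 0 = 0 ∧ ((d, r) ≠ (1, 0) → 0 < eExp n d r) := by
  obtain ⟨m, rfl⟩ := hd
  have hd0 : 1 ≤ d := Nat.pos_of_ne_zero fun h => by simp [h] at hn
  have hm0 : 1 ≤ m := Nat.pos_of_ne_zero fun h => by simp [h] at hn
  have hmd : (d * m) / d = m := Nat.mul_div_cancel_left _ hd0
  rw [hmd] at hr
  have hrm : r + 1 ≤ m := by omega
  have key := two_eExp (d * m) d r m (by omega) rfl hrm
  have key2 := two_eExp (d * m) 1 0 (d * m) one_ne_zero (one_mul _) hn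
  norm_num at key2
  have hdz : (1 : ℤ) ≤ d := by exact_mod_cast hd0
  have hmz : (1 : ℤ) ≤ m := by exact_mod_cast hm0
  have hrz : (r : ℤ) + 1 ≤ m := by exact_mod_cast hrm
  have hr0 : (0 : ℤ) ≤ r := Int.natCast_nonneg r
  have hA : (0 : ℤ) ≤ (d : ℤ) * r * (2 * m - r - 1) := by
    apply mul_nonneg (mul_nonneg (by linarith) hr0)
    linarith
  have hB : (0 : ℤ) ≤ (m : ℤ) * m * d * (d - 1) := by
    apply mul_nonneg (mul_nonneg (mul_nonneg (by linarith) (by linarith)) (by linarith))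
    linarith
  refine ⟨by linarith, by linarith, ?_⟩
  intro hne
  have h' : 2 ≤ d ∨ 1 ≤ r := by
    by_contra h
    push_neg at h
    exact hne (by simp [Prod.ext_iff]; omega)
  rcases h' with h | h
  · have h2d : (2 : ℤ) ≤ d := by exact_mod_cast h
    have hmm : (1 : ℤ) ≤ (m : ℤ) * m := by nlinarith
    have hmmd : (1 : ℤ) ≤ (m : ℤ) * m * d := by nlinarith
    have hB1 : (1 : ℤ) ≤ (m : ℤ) * m * d * (d - 1) := by nlinarith
    linarith
  · have h1r : (1 : ℤ) ≤ r := by exact_mod_cast h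
    have hdr : (1 : ℤ) ≤ (d : ℤ) * r := by nlinarith
    have hfac : (1 : ℤ) ≤ 2 * (m : ℤ) - r - 1 := by linarith
    have hA1 : (1 : ℤ) ≤ (d : ℤ) * r * (2 * m - r - 1) := by nlinarith
    linarith
end
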